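/- arXiv:2102.05312 — 3 statements merged into one kernel-verified Lean document; each statement's English description precedes it below -/
import Mathlib

section
/- Let w and u be nonzero vectors in ℝ^d with u a unit vector, and let θ(w,u) = arccos(⟨w,u⟩/(‖w‖‖u‖)) ∈ [0,π] be the angle between them. Then θ(w,u) ≤ π‖w - u‖. -/
/-!
Normalising `w` moves it by `|1 - ‖w‖| ≤ ‖w - u‖`, so the chord between `w / ‖w‖` and `u` is at
most `2 ‖w - u‖`; on the unit sphere the law of cosines and `cos θ ≤ 1 - 2 θ² / π²` bound the angle
by `π / 2` times the chord. When `‖w - u‖ ≥ 1` there is nothing to prove, as angles are at most `π`.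
-/

open RealInnerProductSpace

section NormedSpace

variable {E : Type*} [NormedAddCommGroup E] [NormedSpace ℝ E]

theorem norm_smul_inv_norm_sub_self {x : E} (hx : x ≠ 0) : ‖‖x‖⁻¹ • x - x‖ = |1 - ‖x‖| := by
  have hx' : 0 < ‖x‖ := norm_pos_iff.2 hx
  calc ‖‖x‖⁻¹ • x - x‖ = ‖(‖x‖⁻¹ * (1 - ‖x‖)) • x‖ := by
        rw [mul_sub, mul_one, inv_mul_cancel₀ hx'.ne', sub_smul, one_smul]
    _ = |1 - ‖x‖| := by
        rw [norm_smul, norm_mul, norm_inv, norm_norm, Real.norm_eq_abs, mul_comm,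
          mul_inv_cancel_left₀ hx'.ne']

theorem norm_smul_inv_norm_sub_le {x y : E} (hx : x ≠ 0) (hy : ‖y‖ = 1) :
    ‖‖x‖⁻¹ • x - y‖ ≤ 2 * ‖x - y‖ := by
  have hnorm : |1 - ‖x‖| ≤ ‖x - y‖ := by
    simpa only [hy, abs_sub_comm] using abs_norm_sub_norm_le x y
  calc ‖‖x‖⁻¹ • x - y‖ ≤ ‖‖x‖⁻¹ • x - x‖ + ‖x - y‖ := norm_sub_le_norm_sub_add_norm_sub _ _ _
    _ ≤ 2 * ‖x - y‖ := by rw [norm_smul_inv_norm_sub_self hx]; linarith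

end NormedSpace

namespace InnerProductGeometry

variable {V : Type*} [NormedAddCommGroup V] [InnerProductSpace ℝ V]

theorem angle_le_pi_div_two_mul_norm_sub {x y : V} (hx : ‖x‖ = 1) (hy : ‖y‖ = 1) :
    angle x y ≤ Real.pi / 2 * ‖x - y‖ := by
  have hcos : Real.cos (angle x y) ≤ 1 - 2 / Real.pi ^ 2 * angle x y ^ 2 :=
    Real.cos_le_one_sub_mul_cos_sq <| abs_le.2
      ⟨by linarith [angle_nonneg x y, Real.pi_pos], angle_le_pi x y⟩
  have hchord : ‖x - y‖ ^ 2 = 2 - 2 * Real.cos (angle x y) := by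
    rw [sq, norm_sub_sq_eq_norm_sq_add_norm_sq_sub_two_mul_norm_mul_norm_mul_cos_angle, hx, hy]
    ring
  refine le_of_sq_le_sq ?_ (by positivity)
  calc angle x y ^ 2 = Real.pi ^ 2 / 4 * (2 * (2 / Real.pi ^ 2 * angle x y ^ 2)) := by
        field_simp; ring
    _ ≤ Real.pi ^ 2 / 4 * ‖x - y‖ ^ 2 := by gcongr; linarith
    _ = (Real.pi / 2 * ‖x - y‖) ^ 2 := by ring

theorem angle_le_pi_mul_norm_sub (x : V) {y : V} (hy : ‖y‖ = 1) :
    angle x y ≤ Real.pi * ‖x - y‖ := by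
  by_cases hfar : 1 ≤ ‖x - y‖
  · nlinarith [angle_le_pi x y, Real.pi_pos]
  have hx : x ≠ 0 := by
    rintro rfl
    simp [hy] at hfar
  calc angle x y = angle (‖x‖⁻¹ • x) y := (angle_smul_left_of_pos _ _ (by positivity)).symm
    _ ≤ Real.pi / 2 * ‖‖x‖⁻¹ • x - y‖ :=
        angle_le_pi_div_two_mul_norm_sub (norm_smul_inv_norm hx) hy
    _ ≤ Real.pi / 2 * (2 * ‖x - y‖) := by gcongr; exact norm_smul_inv_norm_sub_le hx hy
    _ = Real.pi * ‖x - y‖ := by ring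

end InnerProductGeometry

theorem stmt4_general {d : ℕ} (w u : EuclideanSpace ℝ (Fin d)) (hu : ‖u‖ = 1) :
    Real.arccos (⟪w, u⟫ / (‖w‖ * ‖u‖)) ≤ Real.pi * ‖w - u‖ :=
  InnerProductGeometry.angle_le_pi_mul_norm_sub w hu

theorem stmt4 {d : ℕ} (w u : EuclideanSpace ℝ (Fin d)) (hw : w ≠ 0) (hu : ‖u‖ = 1) :
    Real.arccos (⟪w, u⟫ / (‖w‖ * ‖u‖)) ≤ Real.pi * ‖w - u‖ :=
  stmt4_general w u hu
end

section
/- Let ψ : ℝ^d → ℝ be nonnegative with ψ(w) = ψ(-w) for all w, let w* be a unit vector, and define θ̃(w,w*) = min(θ(w,w*), π - θ(w,w*)) where θ is the angle. Let f be nondecreasing with f(r/2) > 0, and suppose ψ(w) ≥ f(θ̃(w,w*)) whenever θ̃(w,w*) ≥ r/2. Let w₁,…,w_T satisfy (1/T)∑ψ(w_t) ≤ (1/32)f(r/2). If τ is uniform on [T] and σ is a uniform random sign, independent of τ, then with probability at least 1/4, the unit vector σ·ŵ_τ satisfies ‖σŵ_τ - w*‖ ≤ r. -/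
/-!
By Markov's inequality at most a 1/32 fraction of the indices `t` has `ψ (w t) ≥ f (r / 2)`. For
every other index the lower bound on `ψ` and monotonicity of `f` force
`min (θ, π - θ) < r / 2`, where `θ` is the angle between `w t` and `w*`. Choosing the sign that
realises this minimum, the normalised vector `± ŵ t` makes an angle `< r / 2` with `w*`, and on the
unit sphere the chord is at most the arc, so it lies within `r` of `w*`. Hence at least half of the
`2 T` pairs `(t, σ)` are good.
-/

open InnerProductGeometry Finset

section Angle

variable {E : Type*} [NormedAddCommGroup E] [InnerProductSpace ℝ E]

theorem norm_sub_le_angle_of_norm_eq_one {u v : E} (hu : ‖u‖ = 1) (hv : ‖v‖ = 1) :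
    ‖u - v‖ ≤ angle u v := by
  have hchord : ‖u - v‖ ^ 2 = 2 - 2 * Real.cos (angle u v) := by
    rw [sq, norm_sub_sq_eq_norm_sq_add_norm_sq_sub_two_mul_norm_mul_norm_mul_cos_angle, hu, hv]
    ring
  have hcos := Real.one_sub_sq_div_two_le_cos (x := angle u v)
  exact (pow_le_pow_iff_left₀ (norm_nonneg _) (angle_nonneg u v) two_ne_zero).1 (by nlinarith)

-- Since `‖0‖⁻¹ • 0 = 0` and `angle 0 w = π / 2 ≥ 1`, the bound also holds at `v = 0`.
theorem norm_inv_smul_sub_le_angle (v : E) {w : E} (hw : ‖w‖ = 1) :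
    ‖‖v‖⁻¹ • v - w‖ ≤ angle v w := by
  rcases eq_or_ne v 0 with rfl | hv
  · simp only [smul_zero, zero_sub, norm_neg, hw, angle_zero_left]
    linarith [Real.pi_gt_three]
  · rw [← angle_smul_left_of_pos v w (inv_pos.2 (norm_pos_iff.2 hv))]
    refine norm_sub_le_angle_of_norm_eq_one ?_ hw
    rw [norm_smul, norm_inv, norm_norm, inv_mul_cancel₀ (norm_ne_zero_iff.2 hv)]

theorem exists_sign_norm_inv_smul_sub_le (v : E) {w : E} (hw : ‖w‖ = 1) :
    ∃ σ : Bool, ‖(if σ then (1 : ℝ) else -1) • (‖v‖⁻¹ • v) - w‖ ≤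
      min (angle v w) (Real.pi - angle v w) := by
  rcases le_total (angle v w) (Real.pi - angle v w) with h | h
  · refine ⟨true, ?_⟩
    simpa only [if_true, one_smul, min_eq_left h] using norm_inv_smul_sub_le_angle v hw
  · refine ⟨false, ?_⟩
    have := norm_inv_smul_sub_le_angle (-v) hw
    rwa [norm_neg, smul_neg, angle_neg_left, ← neg_one_smul ℝ (_ • v), ← min_eq_right h] at this

end Angle

theorem card_filter_mul_le_sum {ι : Type*} (s : Finset ι) (g : ι → ℝ) (hg : ∀ i ∈ s, 0 ≤ g i)
    (c : ℝ) : #{i ∈ s | c ≤ g i} * c ≤ ∑ i ∈ s, g i :=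
  calc (#{i ∈ s | c ≤ g i} : ℝ) * c = #{i ∈ s | c ≤ g i} • c := (nsmul_eq_mul _ _).symm
    _ ≤ ∑ i ∈ s with c ≤ g i, g i := card_nsmul_le_sum _ _ _ fun _ hi => (mem_filter.1 hi).2
    _ ≤ ∑ i ∈ s, g i :=
      sum_le_sum_of_subset_of_nonneg (filter_subset _ _) fun i hi _ => hg i hi

theorem card_le_natCard_of_forall_exists {α β : Type*} [Fintype α] [Fintype β]
    (P : α × β → Prop) [DecidablePred P] (s : Finset α) (h : ∀ a ∈ s, ∃ b, P (a, b)) :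
    #s ≤ Nat.card {p // P p} := by
  classical
  calc #s ≤ #((univ.filter P).image Prod.fst) := card_le_card fun a ha => by
        obtain ⟨b, hb⟩ := h a ha
        exact mem_image.2 ⟨(a, b), mem_filter.2 ⟨mem_univ _, hb⟩, rfl⟩
    _ ≤ #(univ.filter P) := card_image_le
    _ = Nat.card {p // P p} := by rw [Nat.card_eq_fintype_card, Fintype.card_subtype]

theorem stmt9_general {d T : ℕ} (r : ℝ)
    (ψ : EuclideanSpace ℝ (Fin d) → ℝ) (hψ0 : ∀ v, 0 ≤ ψ v)
    (wstar : EuclideanSpace ℝ (Fin d)) (hws : ‖wstar‖ = 1)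
    (f : ℝ → ℝ) (hf : Monotone f) (hf0 : 0 < f (r / 2))
    (hlb : ∀ v : EuclideanSpace ℝ (Fin d),
      r / 2 ≤ min (angle v wstar) (Real.pi - angle v wstar) →
      f (min (angle v wstar) (Real.pi - angle v wstar)) ≤ ψ v)
    (w : Fin T → EuclideanSpace ℝ (Fin d))
    (havg : (∑ t, ψ (w t)) / T ≤ f (r / 2) / 32) :
    (1 / 4 : ℝ) * (2 * T) ≤
      (Nat.card {p : Fin T × Bool //
        ‖(if p.2 then (1 : ℝ) else -1) • (‖w p.1‖⁻¹ • w p.1) - wstar‖ ≤ r} : ℝ) := by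
  classical
  obtain rfl | hT := T.eq_zero_or_pos
  · simp
  set bad : Finset (Fin T) := {t | f (r / 2) ≤ ψ (w t)}
  set good : Finset (Fin T) := {t | ¬ f (r / 2) ≤ ψ (w t)}
  have hbad : (#bad : ℝ) ≤ T / 32 := by
    have hmarkov := card_filter_mul_le_sum univ (fun t => ψ (w t)) (fun t _ => hψ0 _) (f (r / 2))
    have hsum := (div_le_iff₀' (by exact_mod_cast hT : (0 : ℝ) < T)).1 havg
    exact le_of_mul_le_mul_right (by linarith) hf0
  have hsplit : (#bad : ℝ) + #good = T := by
    exact_mod_cast (card_filter_add_card_filter_not (s := univ) _).trans (card_fin T)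
  refine (by linarith : (1 / 4 : ℝ) * (2 * T) ≤ #good).trans
    (Nat.cast_le.2 (card_le_natCard_of_forall_exists _ good fun t ht => ?_))
  have hmin : min (angle (w t) wstar) (Real.pi - angle (w t) wstar) < r / 2 := by
    by_contra! h
    exact (mem_filter.1 ht).2 ((hf h).trans (hlb (w t) h))
  obtain ⟨σ, hσ⟩ := exists_sign_norm_inv_smul_sub_le (w t) hws
  exact ⟨σ, by linarith [(norm_nonneg _).trans hσ]⟩

theorem stmt9 {d T : ℕ} (hT : 0 < T) (r : ℝ) (hr : 0 < r)
    (ψ : EuclideanSpace ℝ (Fin d) → ℝ) (hψ0 : ∀ v, 0 ≤ ψ v) (hψsym : ∀ v, ψ (-v) = ψ v)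
    (wstar : EuclideanSpace ℝ (Fin d)) (hws : ‖wstar‖ = 1)
    (f : ℝ → ℝ) (hf : Monotone f) (hf0 : 0 < f (r / 2))
    (hlb : ∀ v : EuclideanSpace ℝ (Fin d),
      r / 2 ≤ min (angle v wstar) (Real.pi - angle v wstar) →
      f (min (angle v wstar) (Real.pi - angle v wstar)) ≤ ψ v)
    (w : Fin T → EuclideanSpace ℝ (Fin d)) (hw0 : ∀ t, w t ≠ 0)
    (havg : (∑ t, ψ (w t)) / T ≤ f (r / 2) / 32) :
    (1 / 4 : ℝ) * (2 * T) ≤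
      (Nat.card {p : Fin T × Bool //
        ‖(if p.2 then (1 : ℝ) else -1) • (‖w p.1‖⁻¹ • w p.1) - wstar‖ ≤ r} : ℝ) :=
  stmt9_general r ψ hψ0 wstar hws f hf hf0 hlb w havg
end

section
/- Let u, v be unit vectors in ℝ^d with ‖u - v‖ ≤ ρ, and suppose D_X satisfies: for every unit vector w, P(|⟨w,x⟩| ≥ t) ≤ exp(1 - t/β), and for b ≤ R/2, P(|⟨u,x⟩| ≤ b) ≥ bRL. Let D_{u,b} be D_X conditioned on {|⟨u,x⟩| ≤ b}. Then for any a > 0, P_{x∼D_{u,b}}(|⟨v,x⟩| ≥ a) ≤ exp(1 - a/(b + βρ(1 + ln(1/(RbL))))). -/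
/-!
On the band `|⟪u, x⟫| ≤ b` we have `|⟪v, x⟫| ≤ b + |⟪v - u, x⟫|`, and `‖v - u‖ ≤ ρ`, so the
sub-exponential tail of `x` in the direction of `v - u` bounds the joint mass by
`exp (1 - (a - b) / (ρ β))`. Dividing by the band mass `≥ b R L` costs a factor
`exp (log (1 / (R b L)))`, and for `a` beyond the scale `b + β ρ (1 + log (1 / (R b L)))` the
resulting exponent is at most `1 - a / (b + β ρ (1 + log (1 / (R b L))))`; below that scale the
claimed bound is at least `1`.
-/

open MeasureTheory RealInnerProductSpace

section Tails

variable {E : Type*} [NormedAddCommGroup E] [InnerProductSpace ℝ E] [MeasurableSpace E]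

def HasSubexpTails (μ : Measure E) (β : ℝ) : Prop :=
  ∀ w : E, ‖w‖ = 1 → ∀ t : ℝ, 0 < t → (μ {x | t ≤ |⟪w, x⟫|}).toReal ≤ Real.exp (1 - t / β)

theorem HasSubexpTails.tail_le_of_norm_le {μ : Measure E} [IsFiniteMeasure μ] {β ρ t : ℝ}
    (hμ : HasSubexpTails μ β) {w : E} (hw : ‖w‖ ≤ ρ) (ht : 0 < t) :
    (μ {x | t ≤ |⟪w, x⟫|}).toReal ≤ Real.exp (1 - t / (ρ * β)) := by
  rcases eq_or_ne w 0 with rfl | hw0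
  · simp [not_le.mpr ht, (Real.exp_pos _).le]
  have hnorm : 0 < ‖w‖ := norm_pos_iff.mpr hw0
  have hρ : 0 < ρ := hnorm.trans_le hw
  have hsub : {x | t ≤ |⟪w, x⟫|} ⊆ {x | t / ρ ≤ |⟪‖w‖⁻¹ • w, x⟫|} := by
    intro x (hx : t ≤ |⟪w, x⟫|)
    have hscale : |⟪w, x⟫| = ‖w‖ * |⟪‖w‖⁻¹ • w, x⟫| := by
      rw [real_inner_smul_left, abs_mul, abs_inv, abs_norm, mul_inv_cancel_left₀ hnorm.ne']
    rw [Set.mem_ofPred_eq, div_le_iff₀ hρ, mul_comm]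
    calc t ≤ ‖w‖ * |⟪‖w‖⁻¹ • w, x⟫| := hscale ▸ hx
      _ ≤ ρ * |⟪‖w‖⁻¹ • w, x⟫| := by gcongr
  calc (μ {x | t ≤ |⟪w, x⟫|}).toReal
      ≤ (μ {x | t / ρ ≤ |⟪‖w‖⁻¹ • w, x⟫|}).toReal := measureReal_mono hsub
    _ ≤ Real.exp (1 - t / (ρ * β)) := by
      rw [← div_div]
      exact hμ _ (norm_smul_inv_norm hw0) _ (div_pos ht hρ)

end Tails

theorem setOf_le_abs_inner_inter_band_subset {E : Type*} [NormedAddCommGroup E]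
    [InnerProductSpace ℝ E] (u v : E) (a b : ℝ) :
    {x | a ≤ |⟪v, x⟫|} ∩ {x | |⟪u, x⟫| ≤ b} ⊆ {x | a - b ≤ |⟪v - u, x⟫|} := by
  rintro x ⟨hv, hu⟩
  have hsplit : ⟪v, x⟫ = ⟪u, x⟫ + ⟪v - u, x⟫ := by rw [inner_sub_left]; ring
  have := abs_add_le ⟪u, x⟫ ⟪v - u, x⟫
  simp only [Set.mem_ofPred_eq] at hv hu ⊢
  linarith [hsplit ▸ hv]

theorem div_le_exp_add_log_inv {n m p y : ℝ} (hp : 0 < p) (hpm : p ≤ m) (hn : 0 ≤ n)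
    (hny : n ≤ Real.exp y) : n / m ≤ Real.exp (y + Real.log (1 / p)) := by
  rw [Real.exp_add, Real.exp_log (one_div_pos.mpr hp), mul_one_div]
  calc n / m ≤ n / p := div_le_div_of_nonneg_left hn hp hpm
    _ ≤ Real.exp y / p := by gcongr

theorem div_add_le_sub_div_of_le {a b k s : ℝ} (hb : 0 < b) (hk : 0 < k) (hs : 0 ≤ s)
    (ha : b + k * (1 + s) ≤ a) : a / (b + k * (1 + s)) + s ≤ (a - b) / k := by
  have hc : 0 < b + k * (1 + s) := by positivity
  rw [div_add' _ _ _ hc.ne', div_le_div_iff₀ hc hk]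
  -- the two sides differ by `(b + k s) (a - (b + k (1 + s)))`
  nlinarith [mul_nonneg (add_nonneg hb.le (mul_nonneg hk.le hs)) (sub_nonneg.mpr ha)]

theorem stmt16_general {d : ℕ} (μ : Measure (EuclideanSpace ℝ (Fin d))) [IsProbabilityMeasure μ]
    (L R β ρ b : ℝ) (hL : 0 < L) (hR : 0 < R) (hβ : 0 < β) (hρ : 0 < ρ)
    (hb0 : 0 < b)
    (u v : EuclideanSpace ℝ (Fin d))
    (huv : ‖u - v‖ ≤ ρ)
    (htail : ∀ w : EuclideanSpace ℝ (Fin d), ‖w‖ = 1 → ∀ t : ℝ, 0 < t →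
      (μ {x | t ≤ |⟪w, x⟫|}).toReal ≤ Real.exp (1 - t / β))
    (hmass : b * R * L ≤ (μ {x | |⟪u, x⟫| ≤ b}).toReal)
    (a : ℝ) :
    (μ ({x | a ≤ |⟪v, x⟫|} ∩ {x | |⟪u, x⟫| ≤ b})).toReal /
        (μ {x | |⟪u, x⟫| ≤ b}).toReal ≤
      Real.exp (1 - a / (b + β * ρ * (1 + Real.log (1 / (R * b * L))))) := by
  set B := {x : EuclideanSpace ℝ (Fin d) | |⟪u, x⟫| ≤ b}
  have hRbL : 0 < R * b * L := by positivity
  have hRbL_le : R * b * L ≤ (μ B).toReal := by linarith [mul_comm R b]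
  have hB_le_one : (μ B).toReal ≤ 1 := measureReal_le_one
  have hs : 0 ≤ Real.log (1 / (R * b * L)) :=
    Real.log_nonneg ((le_div_iff₀ hRbL).mpr (by linarith))
  set c := b + β * ρ * (1 + Real.log (1 / (R * b * L)))
  rcases le_or_gt a c with hac | hca
  · calc (μ ({x | a ≤ |⟪v, x⟫|} ∩ B)).toReal / (μ B).toReal
        ≤ 1 := div_le_one_of_le₀ (measureReal_mono Set.inter_subset_right) measureReal_nonneg
      _ ≤ Real.exp (1 - a / c) :=
        Real.one_le_exp (by linarith [div_le_one_of_le₀ hac (by positivity : 0 ≤ c)])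
  have hjoint : (μ ({x | a ≤ |⟪v, x⟫|} ∩ B)).toReal ≤ Real.exp (1 - (a - b) / (β * ρ)) := by
    calc (μ ({x | a ≤ |⟪v, x⟫|} ∩ B)).toReal
        ≤ (μ {x | a - b ≤ |⟪v - u, x⟫|}).toReal :=
          measureReal_mono (setOf_le_abs_inner_inter_band_subset u v a b)
      _ ≤ Real.exp (1 - (a - b) / (β * ρ)) := by
        rw [mul_comm β]
        refine HasSubexpTails.tail_le_of_norm_le htail (by rwa [norm_sub_rev]) ?_
        linarith [mul_pos (mul_pos hβ hρ) (by linarith : (0 : ℝ) < 1 + Real.log (1 / (R * b * L)))]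
  calc (μ ({x | a ≤ |⟪v, x⟫|} ∩ B)).toReal / (μ B).toReal
      ≤ Real.exp (1 - (a - b) / (β * ρ) + Real.log (1 / (R * b * L))) :=
        div_le_exp_add_log_inv hRbL hRbL_le measureReal_nonneg hjoint
    _ ≤ Real.exp (1 - a / c) := by
      gcongr
      linarith [div_add_le_sub_div_of_le hb0 (mul_pos hβ hρ) hs hca.le]

theorem stmt16 {d : ℕ} (μ : Measure (EuclideanSpace ℝ (Fin d))) [IsProbabilityMeasure μ]
    (L R β ρ b : ℝ) (hL : 0 < L) (hR : 0 < R) (hβ : 0 < β) (hρ : 0 < ρ)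
    (hb0 : 0 < b) (hb : b ≤ R / 2)
    (u v : EuclideanSpace ℝ (Fin d)) (hu : ‖u‖ = 1) (hv : ‖v‖ = 1)
    (huv : ‖u - v‖ ≤ ρ)
    (htail : ∀ w : EuclideanSpace ℝ (Fin d), ‖w‖ = 1 → ∀ t : ℝ, 0 < t →
      (μ {x | t ≤ |⟪w, x⟫|}).toReal ≤ Real.exp (1 - t / β))
    (hmass : b * R * L ≤ (μ {x | |⟪u, x⟫| ≤ b}).toReal)
    (a : ℝ) (ha : 0 < a) :
    (μ ({x | a ≤ |⟪v, x⟫|} ∩ {x | |⟪u, x⟫| ≤ b})).toReal /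
        (μ {x | |⟪u, x⟫| ≤ b}).toReal ≤
      Real.exp (1 - a / (b + β * ρ * (1 + Real.log (1 / (R * b * L))))) :=
  stmt16_general μ L R β ρ b hL hR hβ hρ hb0 u v huv htail hmass a
end
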